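/- arXiv:2305.06279 — 2 statements merged into one kernel-verified Lean document; each statement's English description precedes it below -/
import Mathlib

section
/- Let d ≥ 1, let F : ℝ^d → ℝ be differentiable, α-strongly convex and β-smooth with 0 < α ≤ β, and let w* be a global minimizer of F. Let w^(0) ∈ ℝ^d and e^(0), …, e^(T−1) ∈ ℝ^d be arbitrary vectors, and define recursively w^(t+1) = w^(t) − (1/β)(∇F(w^(t)) + e^(t)). Then, with ρ := 1 − α/β, for every T ≥ 0: F(w^(T)) − F(w*) ≤ ρ^T · (F(w^(0)) − F(w*)) + (1/(2β)) · Σ_{t=0}^{T−1} ρ^{T−t−1} · ‖e^(t)‖². -/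
open Finset
open scoped RealInnerProductSpace

/-- Pathwise convergence of gradient descent with additive gradient errors. -/
theorem stmt_1
    (d : ℕ) (hd : 1 ≤ d)
    (F : EuclideanSpace ℝ (Fin d) → ℝ)
    (F' : EuclideanSpace ℝ (Fin d) → EuclideanSpace ℝ (Fin d))
    (hF' : ∀ x, HasGradientAt F (F' x) x)
    (α β : ℝ) (hα : 0 < α) (hαβ : α ≤ β)
    (hsc : ∀ x y, F y ≥ F x + ⟪F' x, y - x⟫ + (α / 2) * ‖y - x‖ ^ 2)
    (hsm : ∀ x y, F y ≤ F x + ⟪F' x, y - x⟫ + (β / 2) * ‖y - x‖ ^ 2)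
    (wstar : EuclideanSpace ℝ (Fin d)) (hmin : ∀ y, F wstar ≤ F y)
    (T : ℕ)
    (e : ℕ → EuclideanSpace ℝ (Fin d))
    (w : ℕ → EuclideanSpace ℝ (Fin d))
    (hwrec : ∀ t, w (t + 1) = w t - (1 / β) • (F' (w t) + e t)) :
    F (w T) - F wstar ≤
      (1 - α / β) ^ T * (F (w 0) - F wstar) +
        (1 / (2 * β)) * ∑ t ∈ Finset.range T, (1 - α / β) ^ (T - t - 1) * ‖e t‖ ^ 2 := by
  have hβ : (0:ℝ) < β := lt_of_lt_of_le hα hαβ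
  have hρ0 : 0 ≤ 1 - α / β := by
    have : α / β ≤ 1 := (div_le_one hβ).mpr hαβ
    linarith
  -- PL inequality
  have hPL : ∀ x, 2 * α * (F x - F wstar) ≤ ‖F' x‖ ^ 2 := by
    intro x
    have h1 := hsc x wstar
    have h2 : 0 ≤ ‖α • (wstar - x) + F' x‖ ^ 2 := sq_nonneg _
    rw [norm_add_sq_real, norm_smul, real_inner_smul_left, Real.norm_eq_abs,
      abs_of_pos hα, mul_pow] at h2
    have hgz : ⟪F' x, wstar - x⟫ = ⟪wstar - x, F' x⟫ := real_inner_comm _ _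
    rw [hgz] at h1
    have h5 : F x - F wstar ≤ -(⟪wstar - x, F' x⟫ + (α/2) * ‖wstar - x‖^2) := by
      linarith
    have h6 := mul_le_mul_of_nonneg_left h5 (by positivity : (0:ℝ) ≤ 2 * α)
    nlinarith [h2, h6]
  -- one-step contraction
  have hstep : ∀ t, F (w (t+1)) - F wstar ≤
      (1 - α / β) * (F (w t) - F wstar) + (1/(2*β)) * ‖e t‖ ^ 2 := by
    intro t
    have h1 := hsm (w t) (w (t+1))
    have hdiff : w (t+1) - w t = -((1/β) • (F' (w t) + e t)) := by
      rw [hwrec t]; abel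
    rw [hdiff] at h1
    have hin : ⟪F' (w t), -((1/β) • (F' (w t) + e t))⟫
        = -(1/β) * (‖F' (w t)‖^2 + ⟪F' (w t), e t⟫) := by
      rw [inner_neg_right, real_inner_smul_right, inner_add_right,
        real_inner_self_eq_norm_sq]
      ring
    have hnorm : ‖-((1/β) • (F' (w t) + e t))‖^2
        = (1/β)^2 * (‖F' (w t)‖^2 + 2 * ⟪F' (w t), e t⟫ + ‖e t‖^2) := by
      rw [norm_neg, norm_smul, Real.norm_eq_abs,
        abs_of_pos (by positivity : (0:ℝ) < 1/β), mul_pow, norm_add_sq_real]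
    rw [hin, hnorm] at h1
    have h2 : F (w (t+1)) ≤ F (w t) - (1/(2*β)) * ‖F' (w t)‖^2 + (1/(2*β)) * ‖e t‖^2 := by
      have key : -(1/β) * (‖F' (w t)‖^2 + ⟪F' (w t), e t⟫)
          + (β/2) * ((1/β)^2 * (‖F' (w t)‖^2 + 2 * ⟪F' (w t), e t⟫ + ‖e t‖^2))
          = -(1/(2*β)) * ‖F' (w t)‖^2 + (1/(2*β)) * ‖e t‖^2 := by
        field_simp; ring
      linarith [h1, key.le]
    have h3 := hPL (w t)
    have h4 : (1/(2*β)) * (2 * α * (F (w t) - F wstar)) ≤ (1/(2*β)) * ‖F' (w t)‖^2 :=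
      mul_le_mul_of_nonneg_left h3 (by positivity)
    have heq : (1 - α/β) * (F (w t) - F wstar)
        = (F (w t) - F wstar) - (1/(2*β)) * (2 * α * (F (w t) - F wstar)) := by
      field_simp
    linarith
  -- induction
  induction T with
  | zero => simp
  | succ T ih =>
    have hsum : ∑ t ∈ Finset.range (T+1), (1 - α/β)^(T+1-t-1) * ‖e t‖^2
        = (1 - α/β) * ∑ t ∈ Finset.range T, (1 - α/β)^(T-t-1) * ‖e t‖^2 + ‖e T‖^2 := by
      rw [Finset.sum_range_succ, Finset.mul_sum]
      congr 1
      · apply Finset.sum_congr rfl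
        intro t ht
        have ht' : t < T := Finset.mem_range.mp ht
        have : T + 1 - t - 1 = (T - t - 1) + 1 := by omega
        rw [this, pow_succ]
        ring
      · simp
    have h1 := hstep T
    have h2 := mul_le_mul_of_nonneg_left ih hρ0
    have hpow : (1 - α/β) ^ (T+1) = (1 - α/β) * (1 - α/β)^T := by
      rw [pow_succ]; ring
    rw [hsum, hpow]
    nlinarith [h1, h2]
end

section
/- Let N ≥ 1, let Σ, Q, Ω ∈ ℂ^{N×N} be Hermitian positive definite matrices, and let C ∈ ℝ. If log(det Σ) + Re(Tr(Σ⁻¹ Ω)) − log(det Q) ≤ C + N, then log(det Ω) − log(det Q) ≤ C. -/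
/-!
With `S = √Σ`, the matrix `M = S⁻¹ Ω S⁻¹` is positive definite, `det Ω = det Σ · det M` and
`Tr (Σ⁻¹ Ω) = Tr M`. Hence `log det Ω - log det Σ = log det M = ∑ log λᵢ ≤ ∑ (λᵢ - 1) = Tr M - N`
over the eigenvalues `λᵢ > 0` of `M`, which is the claim after subtracting `log det Q` on both
sides.
-/

open Matrix
open scoped ComplexOrder

namespace Matrix

variable {𝕜 n : Type*} [RCLike 𝕜] [Fintype n] [DecidableEq n]

lemma PosDef.log_re_det_le_re_trace_sub_card {M : Matrix n n 𝕜} (hM : M.PosDef) :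
    Real.log (RCLike.re M.det) ≤ RCLike.re M.trace - Fintype.card n := by
  have hpos := hM.eigenvalues_pos
  rw [hM.isHermitian.det_eq_prod_eigenvalues, hM.isHermitian.trace_eq_sum_eigenvalues,
    ← RCLike.ofReal_prod, ← RCLike.ofReal_sum, RCLike.ofReal_re, RCLike.ofReal_re,
    Real.log_prod fun i _ ↦ (hpos i).ne']
  calc ∑ i, Real.log (hM.isHermitian.eigenvalues i)
      ≤ ∑ i, (hM.isHermitian.eigenvalues i - 1) :=
        Finset.sum_le_sum fun i _ ↦ Real.log_le_sub_one_of_pos (hpos i)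
    _ = _ := by simp [Finset.sum_sub_distrib]

lemma PosDef.re_det_pos {M : Matrix n n 𝕜} (hM : M.PosDef) : 0 < RCLike.re M.det :=
  (RCLike.pos_iff.mp hM.det_pos).1

lemma IsHermitian.im_det {M : Matrix n n 𝕜} (hM : M.IsHermitian) : RCLike.im M.det = 0 :=
  RCLike.conj_eq_iff_im.mp (by simpa [hM.eq] using (det_conjTranspose M).symm)

open scoped MatrixOrder in
lemma PosDef.log_re_det_sub_log_re_det_le {A B : Matrix n n 𝕜} (hA : A.PosDef)
    (hB : B.PosDef) :
    Real.log (RCLike.re B.det) - Real.log (RCLike.re A.det) ≤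
      RCLike.re (A⁻¹ * B).trace - Fintype.card n := by
  set S := CFC.sqrt A
  have hSS : S * S = A := CFC.sqrt_mul_sqrt_self A hA.posSemidef.nonneg
  have hS : IsUnit S := CFC.isUnit_sqrt_iff_isStrictlyPositive.mpr hA.isStrictlyPositive
  have hSinv : star S⁻¹ = S⁻¹ := (CFC.sqrt_nonneg A).posSemidef.isHermitian.inv
  set M := S⁻¹ * B * S⁻¹
  have hM : M.PosDef := by
    simpa [M, hSinv] using
      (IsUnit.posDef_star_right_conjugate_iff (isUnit_nonsing_inv_iff.mpr hS)).mpr hB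
  have hdet : B.det = A.det * M.det := by
    have hSdet : IsUnit S.det := (isUnit_iff_isUnit_det S).mp hS
    have hBM : B = S * M * S := by
      simp [M, Matrix.mul_assoc, nonsing_inv_mul _ hSdet, mul_nonsing_inv_cancel_left _ _ hSdet]
    calc B.det = (S * M * S).det := congrArg det hBM
      _ = (S * S).det * M.det := by simp only [det_mul]; ring
      _ = A.det * M.det := by rw [hSS]
  have htrace : (A⁻¹ * B).trace = M.trace := by
    rw [trace_mul_cycle, ← hSS, mul_inv_rev]
  have hlog : Real.log (RCLike.re B.det) =
      Real.log (RCLike.re A.det) + Real.log (RCLike.re M.det) := by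
    rw [hdet, RCLike.mul_re, hA.isHermitian.im_det, zero_mul, sub_zero,
      Real.log_mul hA.re_det_pos.ne' hM.re_det_pos.ne']
  rw [hlog, htrace]
  linarith [hM.log_re_det_le_re_trace_sub_card]

end Matrix

theorem stmt_7_general
    (N : ℕ)
    (Sg Q Om : Matrix (Fin N) (Fin N) ℂ)
    (hSg : Sg.PosDef) (hOm : Om.PosDef)
    (C : ℝ)
    (h : Real.log Sg.det.re + ((Sg⁻¹ * Om).trace).re - Real.log Q.det.re ≤ C + N) :
    Real.log Om.det.re - Real.log Q.det.re ≤ C := by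
  have key := hSg.log_re_det_sub_log_re_det_le hOm
  simp only [RCLike.re_to_complex, Fintype.card_fin] at key
  linarith

/-- Feasibility implication: a point satisfying the linearized fronthaul capacity
constraint also satisfies the original log-determinant capacity constraint. -/
theorem stmt_7
    (N : ℕ) (hN : 1 ≤ N)
    (Sg Q Om : Matrix (Fin N) (Fin N) ℂ)
    (hSg : Sg.PosDef) (hQ : Q.PosDef) (hOm : Om.PosDef)
    (C : ℝ)
    (h : Real.log Sg.det.re + ((Sg⁻¹ * Om).trace).re - Real.log Q.det.re ≤ C + N) :
    Real.log Om.det.re - Real.log Q.det.re ≤ C :=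
  stmt_7_general N Sg Q Om hSg hOm C h
end
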